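/- For every byte string P and every token sequence T, T ∈ VCT(P) if and only if there exist a prefix Q of P and a token t ∈ V such that T = encode(Q) ⧺ [t], P is a prefix of Q ⧺ decode(t), and T is valid. Consequently, VCT(P) is a finite set of cardinality at most (|P| + 1)·|V|. -/

import Mathlib

/-!
Formalization of a BPE tokenizer with an ordered merge list.

* `σ` is the (finite) byte alphabet, `τ` is the (finite) vocabulary of tokens.
* `base` embeds each byte as a distinct base token.
* `dec` decodes a single token to a byte string; it is extended to token
  sequences by concatenation (`decodeSeq`).
* `merges` is the ordered merge list; each merge `(l, r, n)` replaces an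
  adjacent pair `(l, r)` by the single token `n`, and satisfies
  `dec n = dec l ++ dec r`.
* `encode` turns a byte string into its base tokens and then, processing the
  merges in order, repeatedly replaces the leftmost adjacent occurrence of
  `(l, r)` by `n` until no occurrence remains, before moving to the next merge.
-/

structure BPE (σ τ : Type*) where
  base : σ → τ
  dec : τ → List σ
  merges : List (τ × τ × τ)
  base_inj : Function.Injective base
  dec_base : ∀ b, dec (base b) = [b]
  dec_merge : ∀ m ∈ merges, dec m.2.2 = dec m.1 ++ dec m.2.1

namespace BPE

variable {σ τ : Type*} [DecidableEq τ]

/-- Decode a token sequence by concatenating the decodings of its tokens. -/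
def decodeSeq (B : BPE σ τ) (T : List τ) : List σ := (T.map B.dec).flatten

/-- Replace the leftmost adjacent occurrence of `(l, r)` by `n`, if any,
also returning the starting byte position of the replaced pair. -/
def replaceLeftmost (B : BPE σ τ) (l r n : τ) : List τ → Option (ℕ × List τ)
  | [] => none
  | [_] => none
  | t :: u :: rest =>
      if t = l ∧ u = r then some (0, n :: rest)
      else (B.replaceLeftmost l r n (u :: rest)).map
        (fun p => (p.1 + (B.dec t).length, t :: p.2))

/-- Repeatedly replace the leftmost adjacent occurrence of `(l, r)` by `n`
until no occurrence remains (the fuel, taken to be the length of the list,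
suffices since every replacement shortens the list).  Also returns the list
of byte positions at which replacements were performed, in order. -/
def runMerge (B : BPE σ τ) (l r n : τ) : ℕ → List τ → List τ × List ℕ
  | 0, T => (T, [])
  | fuel + 1, T =>
    match B.replaceLeftmost l r n T with
    | none => (T, [])
    | some (p, T') =>
      let q := B.runMerge l r n fuel T'
      (q.1, p :: q.2)

/-- Process an (indexed) list of merges in order, starting from token sequence
`T`; returns the final token sequence together with the ordered list of merge
applications performed, each recorded as a pair
(index of the merge in the merge list, starting byte position). -/
def encodeRunAux (B : BPE σ τ) : List (ℕ × τ × τ × τ) → List τ → List τ × List (ℕ × ℕ)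
  | [], T => (T, [])
  | (i, l, r, n) :: ms, T =>
    let q := B.runMerge l r n T.length T
    let q' := B.encodeRunAux ms q.1
    (q'.1, q.2.map (fun p => (i, p)) ++ q'.2)

/-- The full run of the BPE encoder on a byte string `S`: the final token
sequence together with the ordered list of merge applications performed. -/
def encodeRun (B : BPE σ τ) (S : List σ) : List τ × List (ℕ × ℕ) :=
  B.encodeRunAux ((List.range B.merges.length).zip B.merges) (S.map B.base)

/-- BPE encoding of a byte string. -/
def encode (B : BPE σ τ) (S : List σ) : List τ := (B.encodeRun S).1

/-- The ordered list of merge applications (merge index, starting byte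
position) performed during the run of `encode` on `S`. -/
def encodeApps (B : BPE σ τ) (S : List σ) : List (ℕ × ℕ) := (B.encodeRun S).2

/-- A token sequence is *valid* if it is the canonical encoding of the byte
string it decodes to. -/
def Valid (B : BPE σ τ) (T : List τ) : Prop := B.encode (B.decodeSeq T) = T

/-- The merge list is in *normal form*:
(i) each token is produced by at most one merge;
(ii) every token `t` satisfies `encode (dec t) = [t]`;
(iii) every merge occurs later in the merge list than the merges producing
each of its two input tokens. -/
def NormalForm (B : BPE σ τ) : Prop :=
  (∀ i j (hi : i < B.merges.length) (hj : j < B.merges.length),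
      (B.merges[i]'hi).2.2 = (B.merges[j]'hj).2.2 → i = j) ∧
  (∀ t : τ, B.encode (B.dec t) = [t]) ∧
  (∀ i j (hi : i < B.merges.length) (hj : j < B.merges.length),
      (B.merges[i]'hi).2.2 = (B.merges[j]'hj).1 ∨
        (B.merges[i]'hi).2.2 = (B.merges[j]'hj).2.1 → i < j)

/-- The merge application `app = (t, p)` *crosses* byte position `c` if the
token it creates (the output of merge `t`, starting at byte position `p`)
has a byte span properly containing `c`. -/
def AppCrosses (B : BPE σ τ) (app : ℕ × ℕ) (c : ℕ) : Prop :=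
  ∃ h : app.1 < B.merges.length,
    app.2 < c ∧ c < app.2 + (B.dec (B.merges[app.1]'h).2.2).length

/-- Some merge applied during the run of `encode` on `S` crosses position `c`. -/
def MergeCrossesInRun (B : BPE σ τ) (S : List σ) (c : ℕ) : Prop :=
  ∃ app ∈ B.encodeApps S, B.AppCrosses app c

/-- The token sequence `U` contains a token whose byte span properly
contains position `c`. -/
def TokenCrosses (B : BPE σ τ) (U : List τ) (c : ℕ) : Prop :=
  ∃ k, k < U.length ∧
    (B.decodeSeq (U.take k)).length < c ∧ c < (B.decodeSeq (U.take (k + 1))).length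

end BPE
namespace BPE

variable {σ τ : Type*} [DecidableEq τ]

/-- The *Valid Covering Tree* of a byte string `P`: the set of all nonempty
token sequences `T = [t₁, …, tₙ]` such that (1) `P` is a prefix of
`decode T`, (2) `decode [t₁, …, t_{n-1}]` is a prefix of `P`, and
(3) `T` is valid. -/
def VCT (B : BPE σ τ) (P : List σ) : Set (List τ) :=
  {T | T ≠ [] ∧ P <+: B.decodeSeq T ∧ B.decodeSeq T.dropLast <+: P ∧ B.Valid T}

/-- The maximal prefix of a token sequence whose total decoded length is at
most `k`, i.e. the tokens whose byte spans end at or before position `k`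
(together with their spans, which are determined by the preceding tokens). -/
def spanPrefix (B : BPE σ τ) (k : ℕ) : List τ → List τ
  | [] => []
  | t :: T =>
      if (B.dec t).length ≤ k then t :: B.spanPrefix (k - (B.dec t).length) T
      else []

/-- `L₀` is a *lookahead bound* for the tokenizer if whenever two byte strings
agree on their first `k + L₀` bytes, the tokens of their encodings whose byte
spans end at or before position `k` coincide (with identical spans). -/
def LookaheadBound (B : BPE σ τ) (L₀ : ℕ) : Prop :=
  ∀ (x x' : List σ) (k : ℕ), x.take (k + L₀) = x'.take (k + L₀) →
    B.spanPrefix k (B.encode x) = B.spanPrefix k (B.encode x')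

/-- `U'` is the minimal covering prefix of `U` with respect to `P`: the
shortest prefix of `U` whose decoding has `P` as a prefix. -/
def IsMinCover (B : BPE σ τ) (P : List σ) (U U' : List τ) : Prop :=
  U' <+: U ∧ P <+: B.decodeSeq U' ∧
    ∀ U'' : List τ, U'' <+: U → P <+: B.decodeSeq U'' → U'.length ≤ U''.length

/-- The pair `(l, r)` occurs adjacently in `T`. -/
def PairAdj (l r : τ) (T : List τ) : Prop := ∃ A C, T = A ++ l :: r :: C

/-- The merge application `a = (t, i)` (merge index `t`, starting byte
position `i` of the left token) is applicable to the token sequence `T`. -/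
def Applicable (B : BPE σ τ) (a : ℕ × ℕ) (T : List τ) : Prop :=
  ∃ h : a.1 < B.merges.length, ∃ A C : List τ,
    T = A ++ (B.merges[a.1]'h).1 :: (B.merges[a.1]'h).2.1 :: C ∧
      (B.decodeSeq A).length = a.2

/-- `T'` is obtained from `T` by performing the merge application `a = (t, i)`:
the input pair of merge `t`, occurring adjacently in `T` with the left token
starting at byte position `i`, is replaced by the output token of merge `t`. -/
def ApplyApp (B : BPE σ τ) (a : ℕ × ℕ) (T T' : List τ) : Prop :=
  ∃ h : a.1 < B.merges.length, ∃ A C : List τ,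
    T = A ++ (B.merges[a.1]'h).1 :: (B.merges[a.1]'h).2.1 :: C ∧
      (B.decodeSeq A).length = a.2 ∧
      T' = A ++ (B.merges[a.1]'h).2.2 :: C

/-- Lexicographic order on merge applications `(t, i)`. -/
def appLE (a a' : ℕ × ℕ) : Prop :=
  a.1 < a'.1 ∨ (a.1 = a'.1 ∧ a.2 ≤ a'.2)

/-- `GreedyChain B T₀ apps T` holds when the sequence of merge applications
`apps` leads from token sequence `T₀` to token sequence `T`, and each applied
application is lexicographically least among those applicable to the current
token sequence. -/
inductive GreedyChain (B : BPE σ τ) : List τ → List (ℕ × ℕ) → List τ → Prop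
  | nil (T : List τ) : GreedyChain B T [] T
  | cons {T T' Tf : List τ} {a : ℕ × ℕ} {apps : List (ℕ × ℕ)} :
      B.ApplyApp a T T' →
      (∀ a', B.Applicable a' T → appLE a a') →
      GreedyChain B T' apps Tf →
      GreedyChain B T (a :: apps) Tf

end BPE

/-!
The inclusion `⊇` is immediate, and the bound follows since `T = encode Q ++ [t]` is
determined by `|Q| ≤ |P|` and `t`. The content of `⊆` is that validity passes to prefixes:
if `T₁ ++ T₂ = encode (decode T₁ ++ decode T₂)`, the boundary between `T₁` and `T₂` is
present in the final encoding. A merge never creates a boundary, so it was present at every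
stage of the run; a merge straddling it would have removed it for good (tokens decode to
nonempty strings by normal form), so none did, and the run on `decode T₁ ++ decode T₂`
restricts, stage by stage, to the run on `decode T₁`.
-/

namespace BPE

variable {σ τ : Type*} {B : BPE σ τ}

@[simp] lemma decodeSeq_nil : B.decodeSeq ([] : List τ) = [] := rfl

@[simp] lemma decodeSeq_cons (t : τ) (T : List τ) :
    B.decodeSeq (t :: T) = B.dec t ++ B.decodeSeq T := rfl

@[simp] lemma decodeSeq_append (T U : List τ) :
    B.decodeSeq (T ++ U) = B.decodeSeq T ++ B.decodeSeq U := by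
  simp [decodeSeq]

def SplitsAt (B : BPE σ τ) (c : ℕ) (T : List τ) : Prop :=
  ∃ T₁ T₂ : List τ, T = T₁ ++ T₂ ∧ (B.decodeSeq T₁).length = c

lemma SplitsAt.le_length {c : ℕ} {T : List τ} (h : B.SplitsAt c T) :
    c ≤ (B.decodeSeq T).length := by
  obtain ⟨T₁, T₂, rfl, rfl⟩ := h
  simp

lemma SplitsAt.append_right {c : ℕ} {T : List τ} (h : B.SplitsAt c T) (U : List τ) :
    B.SplitsAt c (T ++ U) := by
  obtain ⟨T₁, T₂, rfl, rfl⟩ := h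
  exact ⟨T₁, T₂ ++ U, by simp, rfl⟩

lemma splitsAt_append_cons {c : ℕ} {A C : List τ} {x : τ} (h : B.SplitsAt c (A ++ x :: C)) :
    B.SplitsAt c A ∨
      ∃ C₁ C₂, C = C₁ ++ C₂ ∧ c = (B.decodeSeq A).length + (B.dec x).length +
        (B.decodeSeq C₁).length := by
  obtain ⟨V₁, V₂, hV, rfl⟩ := h
  rcases List.append_eq_append_iff.mp hV with ⟨_ | ⟨y, a⟩, rfl, hxC⟩ | ⟨c', rfl, -⟩
  · exact Or.inl ⟨A, [], by simp, by simp⟩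
  · obtain ⟨rfl, rfl⟩ := List.cons_eq_cons.mp hxC
    exact Or.inr ⟨a, V₂, rfl, by simp [Nat.add_assoc]⟩
  · exact Or.inl ⟨V₁, c', rfl, rfl⟩

lemma not_splitsAt_inside_merged {l r n : τ} (hdec : B.dec n = B.dec l ++ B.dec r)
    (hl : B.dec l ≠ []) (hr : B.dec r ≠ []) (A C : List τ) :
    ¬ B.SplitsAt ((B.decodeSeq A).length + (B.dec l).length) (A ++ n :: C) := by
  have hl := List.length_pos_iff.mpr hl
  have hr := List.length_pos_iff.mpr hr
  intro h
  rcases splitsAt_append_cons h with hA | ⟨C₁, C₂, -, hc⟩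
  · have := hA.le_length
    omega
  · simp only [hdec, List.length_append] at hc
    omega

variable [DecidableEq τ]

section Merge

variable {l r n : τ}

lemma replaceLeftmost_cons_cons_self (C : List τ) :
    B.replaceLeftmost l r n (l :: r :: C) = some (0, n :: C) := by
  simp [replaceLeftmost]

lemma replaceLeftmost_cons {t : τ} {U : List τ} (h : ¬(t = l ∧ U.head? = some r)) :
    B.replaceLeftmost l r n (t :: U) =
      (B.replaceLeftmost l r n U).map (fun p => (p.1 + (B.dec t).length, t :: p.2)) := by
  cases U with
  | nil => rfl
  | cons u U => simp_all [replaceLeftmost]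

lemma replaceLeftmost_eq_none_of_cons {t : τ} {U : List τ}
    (h : B.replaceLeftmost l r n (t :: U) = none) : B.replaceLeftmost l r n U = none := by
  by_cases hc : t = l ∧ U.head? = some r
  · obtain ⟨rfl, hU⟩ := hc
    obtain ⟨C, rfl⟩ : ∃ C, U = r :: C := List.head?_eq_some_iff.mp hU
    simp [replaceLeftmost_cons_cons_self] at h
  · rwa [replaceLeftmost_cons hc, Option.map_eq_none_iff] at h

lemma replaceLeftmost_eq_some {T T' : List τ} {p : ℕ}
    (h : B.replaceLeftmost l r n T = some (p, T')) :
    ∃ A C : List τ, T = A ++ l :: r :: C ∧ T' = A ++ n :: C ∧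
      p = (B.decodeSeq A).length := by
  induction T generalizing p T' with
  | nil => simp [replaceLeftmost] at h
  | cons t U ih =>
    by_cases hc : t = l ∧ U.head? = some r
    · obtain ⟨rfl, hU⟩ := hc
      obtain ⟨C, rfl⟩ : ∃ C, U = r :: C := List.head?_eq_some_iff.mp hU
      rw [replaceLeftmost_cons_cons_self] at h
      obtain ⟨rfl, rfl⟩ := Prod.mk.inj (Option.some.inj h)
      exact ⟨[], C, rfl, rfl, rfl⟩
    · rw [replaceLeftmost_cons hc] at h
      obtain ⟨⟨q, W⟩, hq, hqW⟩ := Option.map_eq_some_iff.mp h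
      obtain ⟨rfl, rfl⟩ := Prod.mk.inj hqW
      obtain ⟨A, C, rfl, rfl, rfl⟩ := ih hq
      exact ⟨t :: A, C, rfl, rfl, by simp [Nat.add_comm]⟩

lemma replaceLeftmost_append_of_eq_some {T₁ T₁' : List τ} {p : ℕ} (T₂ : List τ)
    (h : B.replaceLeftmost l r n T₁ = some (p, T₁')) :
    B.replaceLeftmost l r n (T₁ ++ T₂) = some (p, T₁' ++ T₂) := by
  induction T₁ generalizing p T₁' with
  | nil => simp [replaceLeftmost] at h
  | cons t U ih =>
    by_cases hc : t = l ∧ U.head? = some r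
    · obtain ⟨rfl, hU⟩ := hc
      obtain ⟨C, rfl⟩ : ∃ C, U = r :: C := List.head?_eq_some_iff.mp hU
      rw [replaceLeftmost_cons_cons_self] at h
      obtain ⟨rfl, rfl⟩ := Prod.mk.inj (Option.some.inj h)
      exact replaceLeftmost_cons_cons_self _
    · rw [replaceLeftmost_cons hc] at h
      obtain ⟨⟨q, W⟩, hq, hqW⟩ := Option.map_eq_some_iff.mp h
      obtain ⟨rfl, rfl⟩ := Prod.mk.inj hqW
      have hU : U ≠ [] := by rintro rfl; simp [replaceLeftmost] at hq
      rw [← List.head?_append_of_ne_nil (l₂ := T₂) _ hU] at hc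
      rw [List.cons_append, replaceLeftmost_cons hc, ih hq]
      rfl

lemma replaceLeftmost_append_of_eq_none {T₁ : List τ} (T₂ : List τ)
    (h : B.replaceLeftmost l r n T₁ = none) :
    (∃ A C, T₁ = A ++ [l] ∧ T₂ = r :: C ∧
      B.replaceLeftmost l r n (T₁ ++ T₂) = some ((B.decodeSeq A).length, A ++ n :: C)) ∨
    B.replaceLeftmost l r n (T₁ ++ T₂) =
      (B.replaceLeftmost l r n T₂).map
        (fun p => (p.1 + (B.decodeSeq T₁).length, T₁ ++ p.2)) := by
  induction T₁ with
  | nil => right; simp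
  | cons t U ih =>
    by_cases hc : t = l ∧ (U ++ T₂).head? = some r
    · obtain ⟨rfl, hr⟩ := hc
      cases U with
      | nil =>
        obtain ⟨C, rfl⟩ : ∃ C, T₂ = r :: C := List.head?_eq_some_iff.mp hr
        exact Or.inl ⟨[], C, rfl, rfl, replaceLeftmost_cons_cons_self C⟩
      | cons u U =>
        obtain rfl : u = r := by simpa using hr
        simp [replaceLeftmost_cons_cons_self] at h
    · rw [List.cons_append, replaceLeftmost_cons hc]
      rcases ih (replaceLeftmost_eq_none_of_cons h) with ⟨A, C, rfl, rfl, hA⟩ | hU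
      · refine Or.inl ⟨t :: A, C, rfl, rfl, ?_⟩
        rw [hA]
        simp [Nat.add_comm]
      · right
        rw [hU, Option.map_map]
        congr 1
        funext p
        simp [Nat.add_assoc, Nat.add_comm]

lemma decodeSeq_of_replaceLeftmost_eq_some (hdec : B.dec n = B.dec l ++ B.dec r)
    {T T' : List τ} {p : ℕ} (h : B.replaceLeftmost l r n T = some (p, T')) :
    B.decodeSeq T' = B.decodeSeq T := by
  obtain ⟨A, C, rfl, rfl, -⟩ := replaceLeftmost_eq_some h
  simp [hdec]

lemma length_of_replaceLeftmost_eq_some {T T' : List τ} {p : ℕ}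
    (h : B.replaceLeftmost l r n T = some (p, T')) : T'.length + 1 = T.length := by
  obtain ⟨A, C, rfl, rfl, -⟩ := replaceLeftmost_eq_some h
  simp only [List.length_append, List.length_cons]
  omega

lemma SplitsAt.of_replaceLeftmost_eq_some (hdec : B.dec n = B.dec l ++ B.dec r)
    {T T' : List τ} {p c : ℕ} (h : B.replaceLeftmost l r n T = some (p, T'))
    (hc : B.SplitsAt c T') : B.SplitsAt c T := by
  obtain ⟨A, C, rfl, rfl, -⟩ := replaceLeftmost_eq_some h
  rcases splitsAt_append_cons hc with hA | ⟨C₁, C₂, rfl, rfl⟩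
  · exact hA.append_right _
  · exact ⟨A ++ l :: r :: C₁, C₂, by simp, by simp [hdec, Nat.add_assoc]⟩

lemma runMerge_of_eq_none {T : List τ} (h : B.replaceLeftmost l r n T = none) (f : ℕ) :
    B.runMerge l r n f T = (T, []) := by
  cases f <;> simp [runMerge, h]

lemma runMerge_succ_fst_of_eq_some {T T' : List τ} {p : ℕ}
    (h : B.replaceLeftmost l r n T = some (p, T')) (f : ℕ) :
    (B.runMerge l r n (f + 1) T).1 = (B.runMerge l r n f T').1 := by
  simp [runMerge, h]

lemma decodeSeq_runMerge (hdec : B.dec n = B.dec l ++ B.dec r) (f : ℕ) (T : List τ) :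
    B.decodeSeq (B.runMerge l r n f T).1 = B.decodeSeq T := by
  induction f generalizing T with
  | zero => rfl
  | succ f ih =>
    cases h : B.replaceLeftmost l r n T with
    | none => rw [runMerge_of_eq_none h]
    | some q =>
      rw [runMerge_succ_fst_of_eq_some h, ih, decodeSeq_of_replaceLeftmost_eq_some hdec h]

lemma SplitsAt.of_runMerge (hdec : B.dec n = B.dec l ++ B.dec r) {c f : ℕ} {T : List τ}
    (hc : B.SplitsAt c (B.runMerge l r n f T).1) : B.SplitsAt c T := by
  induction f generalizing T with
  | zero => exact hc
  | succ f ih =>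
    cases h : B.replaceLeftmost l r n T with
    | none => rwa [runMerge_of_eq_none h] at hc
    | some q =>
      rw [runMerge_succ_fst_of_eq_some h] at hc
      exact (ih hc).of_replaceLeftmost_eq_some hdec h

/-- Each replacement shortens the list, so `T.length` steps of fuel already suffice. -/
lemma runMerge_fst_eq_of_length_le {T : List τ} {f g : ℕ} (hT : T.length ≤ f) (hfg : f ≤ g) :
    (B.runMerge l r n g T).1 = (B.runMerge l r n f T).1 := by
  induction f generalizing T g with
  | zero =>
    obtain rfl : T = [] := List.eq_nil_of_length_eq_zero (by omega)
    rw [runMerge_of_eq_none rfl, runMerge_of_eq_none rfl]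
  | succ f ih =>
    obtain ⟨g, rfl⟩ : ∃ g', g = g' + 1 := ⟨g - 1, by omega⟩
    cases h : B.replaceLeftmost l r n T with
    | none => rw [runMerge_of_eq_none h, runMerge_of_eq_none h]
    | some q =>
      have := length_of_replaceLeftmost_eq_some h
      rw [runMerge_succ_fst_of_eq_some h, runMerge_succ_fst_of_eq_some h, ih (by omega) (by omega)]

lemma runMerge_append_of_splitsAt (hdec : B.dec n = B.dec l ++ B.dec r)
    (hl : B.dec l ≠ []) (hr : B.dec r ≠ []) (f : ℕ) (T₁ T₂ : List τ)
    (hc : B.SplitsAt (B.decodeSeq T₁).length (B.runMerge l r n f (T₁ ++ T₂)).1) :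
    ∃ V, (B.runMerge l r n f (T₁ ++ T₂)).1 = (B.runMerge l r n f T₁).1 ++ V := by
  induction f generalizing T₁ T₂ with
  | zero => exact ⟨T₂, rfl⟩
  | succ f ih =>
    cases h₁ : B.replaceLeftmost l r n T₁ with
    | some q =>
      have h₁₂ := replaceLeftmost_append_of_eq_some T₂ h₁
      rw [runMerge_succ_fst_of_eq_some h₁₂] at hc ⊢
      rw [runMerge_succ_fst_of_eq_some h₁]
      exact ih _ _ (by rwa [decodeSeq_of_replaceLeftmost_eq_some hdec h₁])
    | none =>
      rw [runMerge_of_eq_none h₁]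
      rcases replaceLeftmost_append_of_eq_none T₂ h₁ with ⟨A, C, rfl, rfl, hj⟩ | h₁₂
      · rw [runMerge_succ_fst_of_eq_some hj] at hc
        exact absurd (by simpa using hc.of_runMerge hdec)
          (not_splitsAt_inside_merged hdec hl hr A C)
      · cases h₂ : B.replaceLeftmost l r n T₂ with
        | none =>
          rw [h₂, Option.map_none] at h₁₂
          exact ⟨T₂, by rw [runMerge_of_eq_none h₁₂]⟩
        | some q =>
          rw [h₂, Option.map_some] at h₁₂
          rw [runMerge_succ_fst_of_eq_some h₁₂] at hc ⊢
          simpa [runMerge_of_eq_none h₁] using ih T₁ _ hc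

end Merge

def MergesSound (B : BPE σ τ) (ms : List (ℕ × τ × τ × τ)) : Prop :=
  ∀ m ∈ ms, B.dec m.2.2.2 = B.dec m.2.1 ++ B.dec m.2.2.1

lemma encodeRunAux_cons_fst (i : ℕ) (l r n : τ) (ms : List (ℕ × τ × τ × τ))
    (T : List τ) :
    (B.encodeRunAux ((i, l, r, n) :: ms) T).1 =
      (B.encodeRunAux ms (B.runMerge l r n T.length T).1).1 := rfl

lemma decodeSeq_encodeRunAux {ms : List (ℕ × τ × τ × τ)} (hms : B.MergesSound ms)
    (T : List τ) : B.decodeSeq (B.encodeRunAux ms T).1 = B.decodeSeq T := by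
  induction ms generalizing T with
  | nil => rfl
  | cons m ms ih =>
    obtain ⟨i, l, r, n⟩ := m
    obtain ⟨hdec, hms⟩ := List.forall_mem_cons.mp hms
    rw [encodeRunAux_cons_fst, ih hms, decodeSeq_runMerge hdec]

lemma SplitsAt.of_encodeRunAux {ms : List (ℕ × τ × τ × τ)} (hms : B.MergesSound ms)
    {c : ℕ} {T : List τ} (hc : B.SplitsAt c (B.encodeRunAux ms T).1) : B.SplitsAt c T := by
  induction ms generalizing T with
  | nil => exact hc
  | cons m ms ih =>
    obtain ⟨i, l, r, n⟩ := m
    obtain ⟨hdec, hms⟩ := List.forall_mem_cons.mp hms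
    rw [encodeRunAux_cons_fst] at hc
    exact (ih hms hc).of_runMerge hdec

lemma encodeRunAux_append_of_splitsAt (hne : ∀ t, B.dec t ≠ [])
    {ms : List (ℕ × τ × τ × τ)} (hms : B.MergesSound ms) (T₁ T₂ : List τ)
    (hc : B.SplitsAt (B.decodeSeq T₁).length (B.encodeRunAux ms (T₁ ++ T₂)).1) :
    ∃ V, (B.encodeRunAux ms (T₁ ++ T₂)).1 = (B.encodeRunAux ms T₁).1 ++ V := by
  induction ms generalizing T₁ T₂ with
  | nil => exact ⟨T₂, rfl⟩
  | cons m ms ih =>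
    obtain ⟨i, l, r, n⟩ := m
    obtain ⟨hdec, hms⟩ := List.forall_mem_cons.mp hms
    rw [encodeRunAux_cons_fst] at hc ⊢
    rw [encodeRunAux_cons_fst]
    obtain ⟨W, hW⟩ := runMerge_append_of_splitsAt hdec (hne l) (hne r) _ T₁ T₂
      (hc.of_encodeRunAux hms)
    rw [runMerge_fst_eq_of_length_le (T := T₁) le_rfl (by simp)] at hW
    rw [hW] at hc ⊢
    exact ih hms _ W (by rwa [decodeSeq_runMerge hdec])

lemma encodeRunAux_nil_fst (ms : List (ℕ × τ × τ × τ)) : (B.encodeRunAux ms []).1 = [] := by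
  induction ms with
  | nil => rfl
  | cons m ms ih =>
    obtain ⟨i, l, r, n⟩ := m
    rw [encodeRunAux_cons_fst, runMerge_of_eq_none rfl, ih]

lemma encode_eq_encodeRunAux (x : List σ) :
    B.encode x =
      (B.encodeRunAux ((List.range B.merges.length).zip B.merges) (x.map B.base)).1 := rfl

omit [DecidableEq τ] in
lemma mergesSound_merges : B.MergesSound ((List.range B.merges.length).zip B.merges) :=
  fun m hm => B.dec_merge m.2 (List.of_mem_zip hm).2

omit [DecidableEq τ] in
@[simp] lemma decodeSeq_map_base (x : List σ) : B.decodeSeq (x.map B.base) = x := by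
  induction x with
  | nil => rfl
  | cons a x ih => simp [ih, B.dec_base]

@[simp] lemma decodeSeq_encode (x : List σ) : B.decodeSeq (B.encode x) = x := by
  rw [encode_eq_encodeRunAux, decodeSeq_encodeRunAux mergesSound_merges, decodeSeq_map_base]

@[simp] lemma encode_nil : B.encode [] = [] :=
  encodeRunAux_nil_fst _

lemma NormalForm.dec_ne_nil (hNF : B.NormalForm) (t : τ) : B.dec t ≠ [] := by
  intro h
  simpa [h] using hNF.2.1 t

lemma encode_append_of_splitsAt (hne : ∀ t, B.dec t ≠ []) (x y : List σ)
    (hc : B.SplitsAt x.length (B.encode (x ++ y))) :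
    ∃ V, B.encode (x ++ y) = B.encode x ++ V := by
  rw [encode_eq_encodeRunAux, List.map_append] at hc ⊢
  exact encodeRunAux_append_of_splitsAt hne mergesSound_merges _ _ (by simpa using hc)

omit [DecidableEq τ] in
lemma decodeSeq_eq_nil_iff (hne : ∀ t, B.dec t ≠ []) {T : List τ} :
    B.decodeSeq T = [] ↔ T = [] := by
  cases T <;> simp [hne]

omit [DecidableEq τ] in
lemma append_inj_left_of_decodeSeq_length (hne : ∀ t, B.dec t ≠ [])
    {U₁ U₂ W₁ W₂ : List τ} (h : U₁ ++ U₂ = W₁ ++ W₂)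
    (hlen : (B.decodeSeq U₁).length = (B.decodeSeq W₁).length) :
    U₁ = W₁ := by
  rcases List.append_eq_append_iff.mp h with ⟨a, rfl, -⟩ | ⟨a, rfl, -⟩
  all_goals
    simp only [decodeSeq_append, List.length_append] at hlen
    obtain rfl : a = [] := (decodeSeq_eq_nil_iff hne).mp (List.eq_nil_of_length_eq_zero (by omega))
    simp

lemma Valid.of_append_left (hne : ∀ t, B.dec t ≠ []) {T₁ T₂ : List τ}
    (h : B.Valid (T₁ ++ T₂)) : B.Valid T₁ := by
  have hT : B.encode (B.decodeSeq T₁ ++ B.decodeSeq T₂) = T₁ ++ T₂ := by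
    simpa [Valid] using h
  have hc : B.SplitsAt (B.decodeSeq T₁).length
      (B.encode (B.decodeSeq T₁ ++ B.decodeSeq T₂)) := by
    rw [hT]
    exact ⟨T₁, T₂, rfl, rfl⟩
  obtain ⟨V, hV⟩ := encode_append_of_splitsAt hne _ _ hc
  rw [hT] at hV
  exact (append_inj_left_of_decodeSeq_length hne hV (by simp)).symm

lemma mem_vct_iff (hNF : B.NormalForm) (P : List σ) (T : List τ) :
    T ∈ B.VCT P ↔ ∃ (Q : List σ) (t : τ), Q <+: P ∧ T = B.encode Q ++ [t] ∧
      P <+: Q ++ B.dec t ∧ B.Valid T := by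
  constructor
  · rintro ⟨hT, hP, hdrop, hval⟩
    obtain ⟨T', t, rfl⟩ : ∃ T' t, T = T' ++ [t] :=
      ⟨T.dropLast, T.getLast hT, (List.dropLast_append_getLast hT).symm⟩
    have hT' : B.encode (B.decodeSeq T') = T' := hval.of_append_left hNF.dec_ne_nil
    exact ⟨B.decodeSeq T', t, by simpa using hdrop, by rw [hT'], by simpa using hP, hval⟩
  · rintro ⟨Q, t, hQ, rfl, hP, hval⟩
    exact ⟨by simp, by simpa using hP, by simpa using hQ, hval⟩

lemma vct_subset_image [Fintype τ] (hNF : B.NormalForm) (P : List σ) :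
    B.VCT P ⊆ ((Finset.range (P.length + 1) ×ˢ Finset.univ).image
      fun p : ℕ × τ => B.encode (P.take p.1) ++ [p.2] : Finset (List τ)) := by
  intro T hT
  obtain ⟨Q, t, hQ, rfl, -⟩ := (mem_vct_iff hNF P T).mp hT
  simp only [Finset.coe_image, Set.mem_image, Finset.mem_coe, Finset.mem_product,
    Finset.mem_range, Finset.mem_univ, and_true, Prod.exists]
  exact ⟨Q.length, t, Nat.lt_succ_of_le hQ.length_le, by rw [← List.prefix_iff_eq_take.mp hQ]⟩

end BPE

/-- For every byte string `P` and token sequence `T`, `T ∈ VCT(P)` if and only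
if there exist a prefix `Q` of `P` and a token `t ∈ V` such that
`T = encode Q ++ [t]`, `P` is a prefix of `Q ++ decode t`, and `T` is valid.
Consequently, `VCT(P)` is a finite set of cardinality at most
`(|P| + 1)·|V|`. -/
theorem BPE.vct_characterization {σ τ : Type*} [DecidableEq τ] [Fintype τ]
    (B : BPE σ τ) (hNF : B.NormalForm) (P : List σ) :
    (∀ T : List τ,
      T ∈ B.VCT P ↔
        ∃ (Q : List σ) (t : τ), Q <+: P ∧ T = B.encode Q ++ [t] ∧
          P <+: Q ++ B.dec t ∧ B.Valid T) ∧
      (B.VCT P).Finite ∧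
      (B.VCT P).ncard ≤ (P.length + 1) * Fintype.card τ := by
  have hsub := BPE.vct_subset_image hNF P
  refine ⟨BPE.mem_vct_iff hNF P, (Finset.finite_toSet _).subset hsub,
    (Set.ncard_le_ncard hsub (Finset.finite_toSet _)).trans ?_⟩
  rw [Set.ncard_coe_finset]
  exact Finset.card_image_le.trans (by simp)
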